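/- Let M* (the true dynamics) and M̂ (the estimated dynamics) be two deterministic transition models, and suppose the value function V^π_{M̂} is L-Lipschitz as a function of the initial state. Fix an initial state s₀ with V^π_{M̂}(s₀) > 0, and suppose the quantity e = κ · L · E_{(s,a)∼ρ^π_{M*}}[dist(M*(s,a), M̂(s,a))] (visitation expectation taken along the trajectory of M* from s₀) is finite. Then the performance of π on the true dynamics is lower bounded by that on the estimated dynamics weighted by the uncertainty regularized coefficient: V^π_{M*}(s₀) ≥ V^π_{M̂}(s₀) · (V^π_{M̂}(s₀) − e)/V^π_{M̂}(s₀). -/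

import Mathlib

open scoped ENNReal

/-- Trajectory of a deterministic model `M` under policy `π` from initial state `s₀`. -/
noncomputable def traj {S A : Type*} (M : S × A → S) (π : S → A) (s₀ : S) : ℕ → S
  | 0 => s₀
  | n + 1 => M (traj M π s₀ n, π (traj M π s₀ n))

/-- Value function `V^π_M(s₀) = Σ_t γ^t r(s_t, π(s_t))` along the trajectory of `M`. -/
noncomputable def value {S A : Type*} (M : S × A → S) (π : S → A)
    (r : S × A → ℝ) (γ : ℝ) (s₀ : S) : ℝ :=
  ∑' t : ℕ, γ ^ t * r (traj M π s₀ t, π (traj M π s₀ t))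

/-! Along the true trajectory `s_k`, the Bellman equations of `V_{M*}` and `V_{M̂}` telescope to
`V_{M*}(s₀) - V_{M̂}(s₀) = ∑_{k<n} γ^{k+1} (V_{M̂}(M* s_k) - V_{M̂}(M̂ s_k))`
`+ γ^n (V_{M*} - V_{M̂})(s_n)`.
The Lipschitz bound controls each summand by `γ^{k+1} L dist(M* s_k, M̂ s_k)` and the remainder is
at most `2 γ^n R / (1 - γ)`, which vanishes as `n → ∞`; hence `V_{M̂}(s₀) - V_{M*}(s₀) ≤ e`, and the
uncertainty coefficient cancels against `V_{M̂}(s₀) > 0`. -/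

open Finset Filter Topology

section Discounting

variable {γ R : ℝ}

theorem norm_pow_mul_le (hγ0 : 0 ≤ γ) {x : ℝ} (hx : |x| ≤ R) (t : ℕ) :
    ‖γ ^ t * x‖ ≤ R * γ ^ t := by
  rw [Real.norm_eq_abs, abs_mul, abs_pow, abs_of_nonneg hγ0, mul_comm]
  exact mul_le_mul_of_nonneg_right hx (pow_nonneg hγ0 t)

theorem summable_pow_mul_of_abs_le (hγ0 : 0 ≤ γ) (hγ1 : γ < 1) {f : ℕ → ℝ}
    (hf : ∀ t, |f t| ≤ R) : Summable fun t => γ ^ t * f t :=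
  .of_norm_bounded ((summable_geometric_of_lt_one hγ0 hγ1).mul_left R)
    fun t => norm_pow_mul_le hγ0 (hf t) t

theorem abs_tsum_pow_mul_le (hγ0 : 0 ≤ γ) (hγ1 : γ < 1) {f : ℕ → ℝ}
    (hf : ∀ t, |f t| ≤ R) : |∑' t, γ ^ t * f t| ≤ R / (1 - γ) := by
  rw [← Real.norm_eq_abs, div_eq_mul_inv]
  exact tsum_of_norm_bounded ((hasSum_geometric_of_lt_one hγ0 hγ1).mul_left R)
    fun t => norm_pow_mul_le hγ0 (hf t) t

theorem le_of_forall_sub_pow_mul_le (hγ0 : 0 ≤ γ) (hγ1 : γ < 1) {x y C : ℝ}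
    (h : ∀ n : ℕ, x - γ ^ n * C ≤ y) : x ≤ y := by
  have hlim : Tendsto (fun n : ℕ => x - γ ^ n * C) atTop (𝓝 x) := by
    simpa using tendsto_const_nhds.sub
      ((tendsto_pow_atTop_nhds_zero_of_lt_one hγ0 hγ1).mul_const C)
  exact le_of_tendsto' hlim h

end Discounting

section Dynamics

variable {S A : Type*} (M M' : S × A → S) (π : S → A) (r : S × A → ℝ) {γ R : ℝ}

theorem traj_succ_eq_traj_step (s : S) : ∀ n, traj M π s (n + 1) = traj M π (M (s, π s)) n
  | 0 => rfl
  | n + 1 => by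
      change M (traj M π s (n + 1), _) = M (traj M π (M (s, π s)) n, _)
      rw [traj_succ_eq_traj_step s n]

theorem value_eq_reward_add (hγ0 : 0 ≤ γ) (hγ1 : γ < 1) (hR : ∀ p, |r p| ≤ R) (s : S) :
    value M π r γ s = r (s, π s) + γ * value M π r γ (M (s, π s)) := by
  rw [value, (summable_pow_mul_of_abs_le hγ0 hγ1 fun _ => hR _).tsum_eq_zero_add, value,
    ← tsum_mul_left]
  simp only [traj_succ_eq_traj_step, pow_succ, pow_zero, one_mul, mul_assoc, mul_left_comm]
  rfl

theorem abs_value_le (hγ0 : 0 ≤ γ) (hγ1 : γ < 1) (hR : ∀ p, |r p| ≤ R) (s : S) :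
    |value M π r γ s| ≤ R / (1 - γ) :=
  abs_tsum_pow_mul_le hγ0 hγ1 fun _ => hR _

theorem value_sub_value_eq_sum_add (hγ0 : 0 ≤ γ) (hγ1 : γ < 1) (hR : ∀ p, |r p| ≤ R) (s : S)
    (n : ℕ) :
    value M π r γ s - value M' π r γ s =
      ∑ k ∈ range n, γ ^ (k + 1) * (value M' π r γ (traj M π s (k + 1)) -
          value M' π r γ (M' (traj M π s k, π (traj M π s k)))) +
        γ ^ n * (value M π r γ (traj M π s n) - value M' π r γ (traj M π s n)) := by
  induction n with
  | zero => simp [traj]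
  | succ n ih =>
    have hM : value M π r γ (traj M π s n) = r (traj M π s n, π (traj M π s n)) +
        γ * value M π r γ (traj M π s (n + 1)) := value_eq_reward_add M π r hγ0 hγ1 hR _
    have hM' := value_eq_reward_add M' π r hγ0 hγ1 hR (traj M π s n)
    rw [sum_range_succ, ih]
    linear_combination γ ^ n * hM - γ ^ n * hM'

theorem value_sub_value_le [PseudoMetricSpace S] (hγ0 : 0 ≤ γ) (hγ1 : γ < 1)
    (hR : ∀ p, |r p| ≤ R) {L : ℝ}
    (hLip : ∀ s s' : S, |value M' π r γ s - value M' π r γ s'| ≤ L * dist s s') (s : S)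
    (n : ℕ) :
    value M' π r γ s - value M π r γ s ≤
      γ * L * ∑ k ∈ range n, γ ^ k * dist (M (traj M π s k, π (traj M π s k)))
          (M' (traj M π s k, π (traj M π s k))) +
        γ ^ n * (2 * (R / (1 - γ))) := by
  have hgap := value_sub_value_eq_sum_add M M' π r hγ0 hγ1 hR s n
  set σ := traj M π s
  set V := value M π r γ
  set V' := value M' π r γ
  have hstep : ∀ k ∈ range n, -(γ ^ (k + 1) * (V' (σ (k + 1)) - V' (M' (σ k, π (σ k))))) ≤
      γ * L * (γ ^ k * dist (M (σ k, π (σ k))) (M' (σ k, π (σ k)))) := fun k _ => by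
    have hγk := pow_nonneg hγ0 (k + 1)
    calc _ ≤ γ ^ (k + 1) * |V' (σ (k + 1)) - V' (M' (σ k, π (σ k)))| := by
          rw [← mul_neg]; exact mul_le_mul_of_nonneg_left (neg_le_abs _) hγk
      _ ≤ γ ^ (k + 1) * (L * dist (M (σ k, π (σ k))) (M' (σ k, π (σ k)))) :=
          mul_le_mul_of_nonneg_left (hLip _ _) hγk
      _ = _ := by ring
  have htail : -(γ ^ n * (V (σ n) - V' (σ n))) ≤ γ ^ n * (2 * (R / (1 - γ))) := by
    refine (neg_le_abs _).trans ?_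
    rw [abs_mul, abs_of_nonneg (pow_nonneg hγ0 n)]
    refine mul_le_mul_of_nonneg_left ((abs_sub _ _).trans ?_) (pow_nonneg hγ0 n)
    linarith [abs_value_le M π r hγ0 hγ1 hR (σ n), abs_value_le M' π r hγ0 hγ1 hR (σ n)]
  have hsum := sum_le_sum hstep
  rw [sum_neg_distrib, ← mul_sum] at hsum
  linarith

end Dynamics

theorem value_true_ge_value_est_mul_uncertainty_coeff_general
    {S A : Type*} [MetricSpace S]
    (Mstar Mhat : S × A → S) (π : S → A) (r : S × A → ℝ) (R γ L : ℝ)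
    (hγ0 : 0 < γ) (hγ1 : γ < 1)
    (hR : ∀ p : S × A, |r p| ≤ R)
    (hLip : ∀ s s' : S, |value Mhat π r γ s - value Mhat π r γ s'| ≤ L * dist s s')
    (s₀ : S)
    (hV : 0 < value Mhat π r γ s₀)
    (E : ℝ≥0∞)
    (hE : E = ENNReal.ofReal (γ / (1 - γ) * L) *
      (ENNReal.ofReal (1 - γ) *
        ∑' t : ℕ, ENNReal.ofReal (γ ^ t) *
          ENNReal.ofReal (dist (Mstar (traj Mstar π s₀ t, π (traj Mstar π s₀ t)))
            (Mhat (traj Mstar π s₀ t, π (traj Mstar π s₀ t))))))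
    (hfin : E ≠ ⊤) :
    value Mstar π r γ s₀ ≥
      value Mhat π r γ s₀ *
        ((value Mhat π r γ s₀ - E.toReal) / value Mhat π r γ s₀) := by
  set d : ℕ → ℝ := fun t => dist (Mstar (traj Mstar π s₀ t, π (traj Mstar π s₀ t)))
    (Mhat (traj Mstar π s₀ t, π (traj Mstar π s₀ t)))
  have hE' : E = ENNReal.ofReal (γ * L) * ∑' t, ENNReal.ofReal (γ ^ t * d t) := by
    rw [hE, ← mul_assoc, ← ENNReal.ofReal_mul' (sub_nonneg.mpr hγ1.le)]
    simp only [ENNReal.ofReal_mul (pow_nonneg hγ0.le _)]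
    congr 2
    field_simp [(sub_pos.mpr hγ1).ne']
  rw [mul_div_cancel₀ _ hV.ne', ge_iff_le, sub_le_comm]
  refine le_of_forall_sub_pow_mul_le (C := 2 * (R / (1 - γ))) hγ0.le hγ1 fun n => ?_
  -- In `ℝ≥0∞` the partial sums are dominated by the series with no summability argument.
  rw [← ENNReal.ofReal_le_iff_le_toReal hfin, hE']
  calc ENNReal.ofReal (_ - γ ^ n * (2 * (R / (1 - γ))))
      ≤ ENNReal.ofReal (γ * L * ∑ k ∈ range n, γ ^ k * d k) := ENNReal.ofReal_le_ofReal <| by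
        linarith [value_sub_value_le Mstar Mhat π r hγ0.le hγ1 hR hLip s₀ n]
    _ = ENNReal.ofReal (γ * L) * ∑ k ∈ range n, ENNReal.ofReal (γ ^ k * d k) := by
        have hd : ∀ k, 0 ≤ γ ^ k * d k := fun k => mul_nonneg (pow_nonneg hγ0.le k) dist_nonneg
        rw [ENNReal.ofReal_mul' (sum_nonneg fun k _ => hd k),
          ENNReal.ofReal_sum_of_nonneg fun k _ => hd k]
    _ ≤ ENNReal.ofReal (γ * L) * ∑' k, ENNReal.ofReal (γ ^ k * d k) := by
        gcongr; exact ENNReal.sum_le_tsum _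

/-- If `V^π_M̂` is `L`-Lipschitz, `V^π_M̂(s₀) > 0`, and the quantity
`e = κ·L·E_{(s,a)∼ρ^π_{M*}}[dist(M*(s,a), M̂(s,a))]` is finite, then
`V^π_{M*}(s₀) ≥ V^π_{M̂}(s₀) · (V^π_{M̂}(s₀) − e)/V^π_{M̂}(s₀)` (the lower bound
weighted by the uncertainty regularized coefficient). -/
theorem value_true_ge_value_est_mul_uncertainty_coeff
    {S A : Type*} [MetricSpace S]
    (Mstar Mhat : S × A → S) (π : S → A) (r : S × A → ℝ) (R γ L : ℝ)
    (hγ0 : 0 < γ) (hγ1 : γ < 1)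
    (hR : ∀ p : S × A, |r p| ≤ R)
    (hL : 0 ≤ L)
    (hLip : ∀ s s' : S, |value Mhat π r γ s - value Mhat π r γ s'| ≤ L * dist s s')
    (s₀ : S)
    (hV : 0 < value Mhat π r γ s₀)
    (E : ℝ≥0∞)
    (hE : E = ENNReal.ofReal (γ / (1 - γ) * L) *
      (ENNReal.ofReal (1 - γ) *
        ∑' t : ℕ, ENNReal.ofReal (γ ^ t) *
          ENNReal.ofReal (dist (Mstar (traj Mstar π s₀ t, π (traj Mstar π s₀ t)))
            (Mhat (traj Mstar π s₀ t, π (traj Mstar π s₀ t))))))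
    (hfin : E ≠ ⊤) :
    value Mstar π r γ s₀ ≥
      value Mhat π r γ s₀ *
        ((value Mhat π r γ s₀ - E.toReal) / value Mhat π r γ s₀) :=
  value_true_ge_value_est_mul_uncertainty_coeff_general Mstar Mhat π r R γ L hγ0 hγ1 hR hLip s₀ hV E
    hE hfin
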